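/- Let A, B be real n×n matrices, let c ∈ ℝ^{3n+1} be fixed, and write points as (x, y, w, z) ∈ ℝ^n × ℝ^n × ℝ^n × ℝ with linear functional ℓ(x,y,w,z) = ⟨(x,y,w,z), c⟩. Define C₁ = { (x,y,w,z) ∈ ℝ₊^n × ℝ₊^n × ℝ₊^n × ℝ₊ : w = Bx − Ay, e^⊤x = 1, e^⊤y = z }, G₁(x,y,w,z) = ‖y‖² + [((z+1)² + ‖y−x‖²)² + ((z−1)² + ‖y+x‖²)²]/16 + (z² + ‖x‖²)²/2 + ‖x+w‖²/4, and for u = (u_x, u_z, u_{z+1}, u_{z−1}, u_{y+x}, u_{y−x}) ∈ ℝ⁶ define Ḡ₁(x,y,w,u) = ‖y‖² + [(u_{z+1} + u_{y−x})² + (u_{z−1} + u_{y+x})²]/16 + (u_z + u_x)²/2 + ‖x+w‖²/4, and QC₁ = { (x,y,w,z,u) : ‖x‖² ≤ u_x, z² ≤ u_z, (z+1)² ≤ u_{z+1}, (z−1)² ≤ u_{z−1}, ‖y+x‖² ≤ u_{y+x}, ‖y−x‖² ≤ u_{y−x} }. Then: (i) if (x̄,ȳ,w̄,z̄,ū) minimizes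 Ḡ₁(x,y,w,u) − ℓ(x,y,w,z) over { (x,y,w,z,u) : (x,y,w,z) ∈ C₁ and (x,y,w,z,u) ∈ QC₁ }, then (x̄,ȳ,w̄,z̄) minimizes G₁ − ℓ over C₁; (ii) conversely, if (x̄,ȳ,w̄,z̄) minimizes G₁ − ℓ over C₁, then (x̄,ȳ,w̄,z̄,ū) with ū = (‖x̄‖², z̄², (z̄+1)², (z̄−1)², ‖ȳ+x̄‖², ‖ȳ−x̄‖²) minimizes Ḡ₁ − ℓ over { (x,y,w,z,u) : (x,y,w,z) ∈ C₁ and (x,y,w,z,u) ∈ QC₁ }. -/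
import Mathlib


open Matrix

namespace Stmt15

variable {n : ℕ}

/-- Membership in the feasible set `C₁` of (CP1):
`x, y, w ≥ 0`, `z ≥ 0`, `w = Bx − Ay`, `eᵀx = 1`, `eᵀy = z`. -/
def memC1 (A B : Matrix (Fin n) (Fin n) ℝ) (x y w : Fin n → ℝ) (z : ℝ) : Prop :=
  (∀ i, 0 ≤ x i) ∧ (∀ i, 0 ≤ y i) ∧ (∀ i, 0 ≤ w i) ∧ 0 ≤ z ∧
    w = B *ᵥ x - A *ᵥ y ∧ (∑ i, x i) = 1 ∧ (∑ i, y i) = z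

/-- The convex function `G₁`, with `‖u‖² = u ⬝ᵥ u`. -/
noncomputable def G1 (x y w : Fin n → ℝ) (z : ℝ) : ℝ :=
  y ⬝ᵥ y +
    (((z + 1) ^ 2 + (y - x) ⬝ᵥ (y - x)) ^ 2 +
      ((z - 1) ^ 2 + (y + x) ⬝ᵥ (y + x)) ^ 2) / 16 +
    (z ^ 2 + x ⬝ᵥ x) ^ 2 / 2 + (x + w) ⬝ᵥ (x + w) / 4

/-- The quadratic function `Ḡ₁` of (QP1), where
`u = (u_x, u_z, u_{z+1}, u_{z−1}, u_{y+x}, u_{y−x})`. -/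
noncomputable def barG1 (x y w : Fin n → ℝ) (u : ℝ × ℝ × ℝ × ℝ × ℝ × ℝ) : ℝ :=
  y ⬝ᵥ y +
    ((u.2.2.1 + u.2.2.2.2.2) ^ 2 + (u.2.2.2.1 + u.2.2.2.2.1) ^ 2) / 16 +
    (u.2.1 + u.1) ^ 2 / 2 + (x + w) ⬝ᵥ (x + w) / 4

/-- Membership in the quadratic-constraint set `QC₁`. -/
def memQC1 (x y : Fin n → ℝ) (z : ℝ) (u : ℝ × ℝ × ℝ × ℝ × ℝ × ℝ) : Prop :=
  x ⬝ᵥ x ≤ u.1 ∧ z ^ 2 ≤ u.2.1 ∧ (z + 1) ^ 2 ≤ u.2.2.1 ∧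
    (z - 1) ^ 2 ≤ u.2.2.2.1 ∧ (y + x) ⬝ᵥ (y + x) ≤ u.2.2.2.2.1 ∧
    (y - x) ⬝ᵥ (y - x) ≤ u.2.2.2.2.2

/-- The linear functional `ℓ(x,y,w,z) = ⟨(x,y,w,z), c⟩` with
`c = (cx, cy, cw, cz) ∈ ℝ^{3n+1}`. -/
def ell (cx cy cw : Fin n → ℝ) (cz : ℝ) (x y w : Fin n → ℝ) (z : ℝ) : ℝ :=
  cx ⬝ᵥ x + cy ⬝ᵥ y + cw ⬝ᵥ w + cz * z

lemma dot_self_nonneg (x : Fin n → ℝ) : 0 ≤ x ⬝ᵥ x :=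
  Finset.sum_nonneg fun i _ => mul_self_nonneg (x i)

lemma barG1_tight (x y w : Fin n → ℝ) (z : ℝ) :
    barG1 x y w (x ⬝ᵥ x, z ^ 2, (z + 1) ^ 2, (z - 1) ^ 2,
      (y + x) ⬝ᵥ (y + x), (y - x) ⬝ᵥ (y - x)) = G1 x y w z := by
  simp [barG1, G1]

lemma G1_le_barG1 (x y w : Fin n → ℝ) (z : ℝ) (u : ℝ × ℝ × ℝ × ℝ × ℝ × ℝ)
    (hu : memQC1 x y z u) : G1 x y w z ≤ barG1 x y w u := by
  obtain ⟨h1, h2, h3, h4, h5, h6⟩ := hu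
  have hx := dot_self_nonneg x
  have hyx := dot_self_nonneg (y + x)
  have hymx := dot_self_nonneg (y - x)
  unfold G1 barG1
  gcongr

/-- (Theorem 4.1) Equivalence between the convex subproblem (CP1)
and its quadratically constrained reformulation (QP1). -/
theorem stmt15 (A B : Matrix (Fin n) (Fin n) ℝ)
    (cx cy cw : Fin n → ℝ) (cz : ℝ) :
    -- (i) a minimizer of (QP1) yields a minimizer of (CP1)
    (∀ (xb yb wb : Fin n → ℝ) (zb : ℝ) (ub : ℝ × ℝ × ℝ × ℝ × ℝ × ℝ),
      memC1 A B xb yb wb zb → memQC1 xb yb zb ub →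
      (∀ (x y w : Fin n → ℝ) (z : ℝ) (u : ℝ × ℝ × ℝ × ℝ × ℝ × ℝ),
        memC1 A B x y w z → memQC1 x y z u →
        barG1 xb yb wb ub - ell cx cy cw cz xb yb wb zb ≤
          barG1 x y w u - ell cx cy cw cz x y w z) →
      ∀ (x y w : Fin n → ℝ) (z : ℝ), memC1 A B x y w z →
        G1 xb yb wb zb - ell cx cy cw cz xb yb wb zb ≤
          G1 x y w z - ell cx cy cw cz x y w z) ∧
    -- (ii) a minimizer of (CP1) yields a minimizer of (QP1)
    (∀ (xb yb wb : Fin n → ℝ) (zb : ℝ),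
      memC1 A B xb yb wb zb →
      (∀ (x y w : Fin n → ℝ) (z : ℝ), memC1 A B x y w z →
        G1 xb yb wb zb - ell cx cy cw cz xb yb wb zb ≤
          G1 x y w z - ell cx cy cw cz x y w z) →
      memQC1 xb yb zb
        (xb ⬝ᵥ xb, zb ^ 2, (zb + 1) ^ 2, (zb - 1) ^ 2,
          (yb + xb) ⬝ᵥ (yb + xb), (yb - xb) ⬝ᵥ (yb - xb)) ∧
      ∀ (x y w : Fin n → ℝ) (z : ℝ) (u : ℝ × ℝ × ℝ × ℝ × ℝ × ℝ),
        memC1 A B x y w z → memQC1 x y z u →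
        barG1 xb yb wb
            (xb ⬝ᵥ xb, zb ^ 2, (zb + 1) ^ 2, (zb - 1) ^ 2,
              (yb + xb) ⬝ᵥ (yb + xb), (yb - xb) ⬝ᵥ (yb - xb)) -
            ell cx cy cw cz xb yb wb zb ≤
          barG1 x y w u - ell cx cy cw cz x y w z) := by
  constructor
  · intro xb yb wb zb ub hC hQ hmin x y w z hx
    have h1 : G1 xb yb wb zb ≤ barG1 xb yb wb ub := G1_le_barG1 _ _ _ _ _ hQ
    have h2 := hmin x y w z (x ⬝ᵥ x, z ^ 2, (z + 1) ^ 2, (z - 1) ^ 2,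
      (y + x) ⬝ᵥ (y + x), (y - x) ⬝ᵥ (y - x)) hx
      ⟨le_refl _, le_refl _, le_refl _, le_refl _, le_refl _, le_refl _⟩
    rw [barG1_tight] at h2
    linarith
  · intro xb yb wb zb hC hmin
    refine ⟨⟨le_refl _, le_refl _, le_refl _, le_refl _, le_refl _, le_refl _⟩,
      fun x y w z u hx hu => ?_⟩
    rw [barG1_tight]
    have h1 := hmin x y w z hx
    have h2 : G1 x y w z ≤ barG1 x y w u := G1_le_barG1 _ _ _ _ _ hu
    linarith

end Stmt15
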